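/- For functions f₁, g₁, f₂, g₂ : ℤ → ℝ and S(g₁,f₂) a function satisfying Δ(S(g₁,f₂)) = g₁ f₂, the composition of rank-one pseudo-difference operators satisfies f₁ Δ⁻¹ g₁ ∘ f₂ Δ⁻¹ g₂ = f₁ S(g₁,f₂) Δ⁻¹ g₂ − f₁ Δ⁻¹ ∘ Λ(S(g₁,f₂)) g₂ in the ring of formal pseudo-difference operators. -/

import Mathlib

namespace DiscreteKP

/-- The space `F` of functions on the lattice `ℤ`. -/
abbrev F := ℤ → ℝ

/-- A formal pseudo-difference operator, represented by its coefficients in the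
shift basis: `a k n` is the coefficient of `Λ^k` at the site `n`
(so `a` represents `Σ_k a_k(n) Λ^k`, with `Δ = Λ - 1`). -/
abbrev PDO := ℤ → ℤ → ℝ

/-- Composition in the ring of formal pseudo-difference operators. -/
noncomputable def pmul (a b : PDO) : PDO := fun m n => ∑' j : ℤ, a j n * b (m - j) (n + j)

/-- A function viewed as a (multiplication) operator. -/
def ofFun (f : F) : PDO := fun k n => if k = 0 then f n else 0

/-- The difference operator `Δ = Λ - 1` as a pseudo-difference operator. -/
def pdelta : PDO := fun m _ => if m = 1 then 1 else if m = 0 then -1 else 0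

/-- The formal inverse `Δ⁻¹ = Σ_{k<0} Λ^k`. -/
def pdeltaInv : PDO := fun m _ => if m < 0 then 1 else 0

/-- The formal adjoint: `(f Λ^k)* = Λ^{-k} ∘ f`. -/
def adj (a : PDO) : PDO := fun m n => a (-m) (n + m)

/-- The action of a pseudo-difference operator on a function (when defined). -/
noncomputable def applyOp (a : PDO) (f : F) : F := fun n => ∑' m : ℤ, a m n * f (n + m)

/-- Projection `P_{<0}` onto the part of strictly negative order in `Δ`
(in the shift basis this is the part with strictly negative powers of `Λ`). -/
def Pneg (a : PDO) : PDO := fun m n => if m < 0 then a m n else 0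

/-- Projection `R_+` onto the nonnegative (local difference operator) part. -/
def Ppos (a : PDO) : PDO := fun m n => if 0 ≤ m then a m n else 0

/-- `P_0`: the zero-order coefficient (in `Δ`) of an operator of `F(Δ)`,
namely `Σ_{k ≥ 0} a_k` in the shift basis. -/
noncomputable def P0 (a : PDO) : F := fun n => ∑' k : ℕ, a (k : ℤ) n

/-- `P_0(A*)`: the zero-order coefficient (in `Δ*`) of the formal adjoint of `a`,
namely `Σ_{m ≤ 0} (adj a)_m` in the shift basis. -/
noncomputable def P0star (a : PDO) : F := fun n => ∑' k : ℕ, adj a (-(k : ℤ)) n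

/-- The residue: the coefficient of `Δ⁻¹`. -/
def res (a : PDO) : F := fun n => a (-1) n

/-- The shift operator `Λ` on functions. -/
def sh (f : F) : F := fun n => f (n + 1)

/-- The backward shift `Λ⁻¹` on functions. -/
def shInv (f : F) : F := fun n => f (n - 1)

/-- The difference operator `Δ` on functions. -/
def dif (f : F) : F := fun n => f (n + 1) - f n

/-- A genuine formal pseudo-difference operator: finitely many positive-order terms. -/
def BoundedAbove (a : PDO) : Prop := ∃ d : ℤ, ∀ m n : ℤ, d < m → a m n = 0

/-- A local difference operator: a finite sum `Σ_{j=0}^d a_j Δ^j`. -/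
def IsLocal (a : PDO) : Prop := ∃ d : ℤ, ∀ m n : ℤ, (m < 0 ∨ d < m) → a m n = 0

/-- The rank-one operator `φ Δ⁻¹ ψ`. -/
noncomputable def ghost (φ ψ : F) : PDO := pmul (ofFun φ) (pmul pdeltaInv (ofFun ψ))

end DiscreteKP

/-!
On coefficients, `Δ⁻¹ ∘ h Δ⁻¹ g` has at `Λ^m` (`m < 0`) the finite sum
`Σ_{m<j<0} h(n+j) g(n+m)`. When `h = Δ S` this telescopes to `(S n - S(n+m+1)) g(n+m)`,
which is the coefficient of `S Δ⁻¹ g - Δ⁻¹ Λ(S) g`. Taking `h = g₁ f₂` and multiplying by `f₁`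
on the left gives the theorem.
-/

namespace DiscreteKP

theorem _root_.Finset.sum_Ico_int_sub_of_le {M : Type*} [AddCommGroup M] (f : ℤ → M) {a b : ℤ}
    (hab : a ≤ b) : ∑ i ∈ Finset.Ico a b, (f (i + 1) - f i) = f b - f a := by
  induction b, hab using Int.leInduction with
  | base => simp
  | succ b hab ih =>
    rw [← Finset.insert_Ico_right_eq_Ico_add_one hab, Finset.sum_insert Finset.right_notMem_Ico,
      ih]
    abel

lemma pmul_ofFun_apply (f : F) (b : PDO) (m n : ℤ) : pmul (ofFun f) b m n = f n * b m n := by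
  rw [pmul, tsum_eq_single 0 fun j hj => by simp [ofFun, hj]]
  simp [ofFun]

lemma pmul_ofFun_ofFun (f g : F) (b : PDO) :
    pmul (ofFun f) (pmul (ofFun g) b) = pmul (ofFun fun n => f n * g n) b := by
  funext m n
  simp only [pmul_ofFun_apply, mul_assoc]

lemma pmul_ofFun_sub (f : F) (a b : PDO) :
    pmul (ofFun f) (a - b) = pmul (ofFun f) a - pmul (ofFun f) b := by
  funext m n
  simp only [pmul_ofFun_apply, Pi.sub_apply, mul_sub]

lemma pmul_pdeltaInv_ofFun_apply (g : F) (m n : ℤ) :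
    pmul pdeltaInv (ofFun g) m n = if m < 0 then g (n + m) else 0 := by
  rw [pmul, tsum_eq_single m fun j hj => by simp [ofFun, sub_eq_zero, Ne.symm hj]]
  simp [pdeltaInv, ofFun]

/-- Only `m < j < 0` contributes: `Δ⁻¹` has no terms of order `j ≥ 0`, and `b` none of order
`m - j ≥ 0`. -/
lemma pmul_pdeltaInv_apply_of_neg (b : PDO) (hb : ∀ j k, 0 ≤ j → b j k = 0) (m n : ℤ) :
    pmul pdeltaInv b m n = ∑ j ∈ Finset.Ioo m 0, b (m - j) (n + j) := by
  rw [pmul, tsum_eq_sum (s := Finset.Ioo m 0)]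
  · refine Finset.sum_congr rfl fun j hj => ?_
    simp [pdeltaInv, (Finset.mem_Ioo.mp hj).2]
  · intro j hj
    rcases lt_or_ge j 0 with hj₀ | hj₀
    · rw [hb _ _ (by simp_all), mul_zero]
    · simp [pdeltaInv, not_lt.mpr hj₀]

/-- The identity `Δ⁻¹ ∘ h ∘ Δ⁻¹ = (Δ⁻¹h) ∘ Δ⁻¹ − Δ⁻¹ ∘ Λ(Δ⁻¹h)`, with `S = Δ⁻¹h`. -/
theorem pdeltaInv_dif_pdeltaInv (S g : F) :
    pmul pdeltaInv (pmul (ofFun (dif S)) (pmul pdeltaInv (ofFun g))) =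
      pmul (ofFun S) (pmul pdeltaInv (ofFun g))
        - pmul pdeltaInv (ofFun fun n => sh S n * g n) := by
  funext m n
  have hneg : ∀ j k, 0 ≤ j → pmul (ofFun (dif S)) (pmul pdeltaInv (ofFun g)) j k = 0 := by
    intro j k hj
    simp [pmul_ofFun_apply, pmul_pdeltaInv_ofFun_apply, not_lt.mpr hj]
  rw [pmul_pdeltaInv_apply_of_neg _ hneg, Pi.sub_apply, Pi.sub_apply, pmul_ofFun_apply,
    pmul_pdeltaInv_ofFun_apply, pmul_pdeltaInv_ofFun_apply]
  split_ifs with hm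
  · have hterm : ∀ j ∈ Finset.Ioo m 0,
        pmul (ofFun (dif S)) (pmul pdeltaInv (ofFun g)) (m - j) (n + j) =
          (S (n + (j + 1)) - S (n + j)) * g (n + m) := by
      intro j hj
      have hmj : m - j < 0 := by linarith [(Finset.mem_Ioo.mp hj).1]
      rw [pmul_ofFun_apply, pmul_pdeltaInv_ofFun_apply, if_pos hmj, dif]
      ring_nf
    rw [Finset.sum_congr rfl hterm, ← Finset.sum_mul, ← Finset.Ico_add_one_left_eq_Ioo,
      Finset.sum_Ico_int_sub_of_le (fun i => S (n + i)) (by omega), sh]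
    ring_nf
  · simp [hm]

/-- Composition of rank-one pseudo-difference operators:
`f₁ Δ⁻¹ g₁ ∘ f₂ Δ⁻¹ g₂ = f₁ S(g₁,f₂) Δ⁻¹ g₂ − f₁ Δ⁻¹ ∘ Λ(S(g₁,f₂)) g₂`,
where `Δ(S(g₁,f₂)) = g₁ f₂`. -/
theorem rank_one_comp (f₁ g₁ f₂ g₂ S : F) (hS : ∀ n, dif S n = g₁ n * f₂ n) :
    pmul (ofFun f₁)
        (pmul pdeltaInv (pmul (ofFun g₁) (pmul (ofFun f₂) (pmul pdeltaInv (ofFun g₂))))) =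
      pmul (ofFun fun n => f₁ n * S n) (pmul pdeltaInv (ofFun g₂))
        - pmul (ofFun f₁) (pmul pdeltaInv (ofFun fun n => sh S n * g₂ n)) := by
  have hdif : dif S = fun n => g₁ n * f₂ n := funext hS
  rw [pmul_ofFun_ofFun g₁, ← hdif, pdeltaInv_dif_pdeltaInv, pmul_ofFun_sub, pmul_ofFun_ofFun]

end DiscreteKP
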